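/- Let L ≥ 1, let H₁, …, H_L, Y, Z be nonempty complete metric spaces, let g : Y → Z be Lipschitz with constant L_g ≥ 0, let ψ_l : H_l × Z → H_l for each l be Lipschitz with constant L_ψ ≥ 0 with respect to the max metric on H_l × Z, and let f : H_L → Y be Lipschitz with constant L_f ≥ 0. Equip S = (H₁ × ⋯ × H_L) × Y with the max metric and define Φ(h₁, …, h_L, y) = (ψ₁(h₁, g(y)), …, ψ_L(h_L, g(y)), f(ψ_L(h_L, g(y)))). If max(1, L_f) · L_ψ · (1 + L_g) < 1, then Φ has a unique fixed point S* = (h₁*, …, h_L*, y*) ∈ S, and for every initial state S₀ the CFL iterates S_{τ+1} = Φ(S_τ) converge to S* with d(S_τ, S*) ≤ (max(1, L_f) · L_ψ · (1 + L_g))^τ · d(S₀, S*). -/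
import Mathlib


/-- **Theorem A.1 instantiated with the compositional CFL structure.**
Let `H₁, …, H_L, Y, Z` be nonempty complete metric spaces, `g : Y → Z` be
`L_g`-Lipschitz, each adapter `ψ_l : H_l × Z → H_l` be `L_ψ`-Lipschitz for
the max metric on `H_l × Z`, and `f : H_L → Y` be `L_f`-Lipschitz.  Equip
`S = (H₁ × ⋯ × H_L) × Y` with the max metric and let
`Φ(h₁, …, h_L, y) = (ψ₁(h₁, g y), …, ψ_L(h_L, g y), f (ψ_L (h_L, g y)))`.
If `max 1 L_f * L_ψ * (1 + L_g) < 1`, then `Φ` has a unique fixed point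
`S*`, and for every initial state `S₀` the CFL iterates `S_τ = Φ^[τ] S₀`
converge to `S*` with `d(S_τ, S*) ≤ (max 1 L_f * L_ψ * (1 + L_g))^τ * d(S₀, S*)`. -/
theorem cfl_fixed_point_convergence
    {L : ℕ} (hL : 1 ≤ L) (H : Fin L → Type*)
    [∀ l, MetricSpace (H l)] [∀ l, CompleteSpace (H l)] [∀ l, Nonempty (H l)]
    {Y Z : Type*} [MetricSpace Y] [CompleteSpace Y] [Nonempty Y]
    [MetricSpace Z] [CompleteSpace Z] [Nonempty Z]
    (g : Y → Z) (Lg : ℝ) (hLg : 0 ≤ Lg)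
    (hg : ∀ y y' : Y, dist (g y) (g y') ≤ Lg * dist y y')
    (ψ : ∀ l, H l × Z → H l) (Lψ : ℝ) (hLψ : 0 ≤ Lψ)
    (hψ : ∀ l, ∀ p q : H l × Z, dist (ψ l p) (ψ l q) ≤ Lψ * dist p q)
    (f : H ⟨L - 1, by omega⟩ → Y) (Lf : ℝ) (hLf : 0 ≤ Lf)
    (hf : ∀ h h', dist (f h) (f h') ≤ Lf * dist h h')
    (Φ : ((∀ l, H l) × Y) → ((∀ l, H l) × Y))
    (hΦ : ∀ s : (∀ l, H l) × Y,
      Φ s = (fun l => ψ l (s.1 l, g s.2),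
             f (ψ ⟨L - 1, by omega⟩ (s.1 ⟨L - 1, by omega⟩, g s.2))))
    (hcontr : max 1 Lf * Lψ * (1 + Lg) < 1) :
    ∃ Sstar : (∀ l, H l) × Y, Φ Sstar = Sstar ∧
      (∀ s : (∀ l, H l) × Y, Φ s = s → s = Sstar) ∧
      ∀ S₀ : (∀ l, H l) × Y,
        (∀ τ : ℕ, dist (Φ^[τ] S₀) Sstar ≤
          (max 1 Lf * Lψ * (1 + Lg)) ^ τ * dist S₀ Sstar) ∧
        Filter.Tendsto (fun τ : ℕ => Φ^[τ] S₀) Filter.atTop (nhds Sstar) := by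
  haveI : Nonempty (Fin L) := ⟨⟨0, by omega⟩⟩
  set K : ℝ := max 1 Lf * Lψ * (1 + Lg) with hKdef
  have hK0 : 0 ≤ K := by positivity
  set K' : NNReal := ⟨K, hK0⟩ with hK'def
  have hKc : (K' : ℝ) = K := rfl
  -- key estimate
  have key : ∀ s s' : (∀ l, H l) × Y, dist (Φ s) (Φ s') ≤ K * dist s s' := by
    intro s s'
    set D := dist s s' with hD
    have hD0 : 0 ≤ D := dist_nonneg
    have h1 : dist s.1 s'.1 ≤ D := by rw [hD, Prod.dist_eq]; exact le_max_left _ _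
    have h2 : dist s.2 s'.2 ≤ D := by rw [hD, Prod.dist_eq]; exact le_max_right _ _
    have hcomp : ∀ l, dist (ψ l (s.1 l, g s.2)) (ψ l (s'.1 l, g s'.2))
        ≤ Lψ * (1 + Lg) * D := by
      intro l
      have := hψ l (s.1 l, g s.2) (s'.1 l, g s'.2)
      have hpd : dist ((s.1 l, g s.2) : H l × Z) (s'.1 l, g s'.2)
          ≤ (1 + Lg) * D := by
        rw [Prod.dist_eq]
        apply max_le
        · have : dist (s.1 l) (s'.1 l) ≤ D :=
            le_trans (dist_le_pi_dist s.1 s'.1 l) h1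
          nlinarith
        · have := hg s.2 s'.2
          nlinarith
      calc dist (ψ l (s.1 l, g s.2)) (ψ l (s'.1 l, g s'.2))
          ≤ Lψ * dist ((s.1 l, g s.2) : H l × Z) (s'.1 l, g s'.2) := this
        _ ≤ Lψ * ((1 + Lg) * D) := by nlinarith
        _ = Lψ * (1 + Lg) * D := by ring
    have hψD0 : 0 ≤ Lψ * (1 + Lg) * D := by positivity
    have hKD : Lψ * (1 + Lg) * D ≤ K * D := by
      have : (1:ℝ) ≤ max 1 Lf := le_max_left _ _
      nlinarith
    rw [hΦ s, hΦ s', Prod.dist_eq]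
    apply max_le
    · refine le_trans ?_ hKD
      exact (dist_pi_le_iff hψD0).2 hcomp
    · calc dist (f (ψ ⟨L - 1, by omega⟩ (s.1 ⟨L - 1, by omega⟩, g s.2)))
            (f (ψ ⟨L - 1, by omega⟩ (s'.1 ⟨L - 1, by omega⟩, g s'.2)))
          ≤ Lf * dist (ψ ⟨L - 1, by omega⟩ (s.1 ⟨L - 1, by omega⟩, g s.2))
              (ψ ⟨L - 1, by omega⟩ (s'.1 ⟨L - 1, by omega⟩, g s'.2)) := hf _ _
        _ ≤ Lf * (Lψ * (1 + Lg) * D) := by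
            have := hcomp ⟨L - 1, by omega⟩; nlinarith
        _ ≤ K * D := by
            have : Lf ≤ max 1 Lf := le_max_right _ _
            nlinarith
  have hlip : LipschitzWith K' Φ := LipschitzWith.of_dist_le_mul key
  have hK1 : K' < 1 := by
    rw [← NNReal.coe_lt_coe, hKc, NNReal.coe_one]; exact hcontr
  have hC : ContractingWith K' Φ := ⟨hK1, hlip⟩
  refine ⟨hC.fixedPoint Φ, hC.fixedPoint_isFixedPt, ?_, ?_⟩
  · intro s hs
    exact hC.fixedPoint_unique hs
  · intro S₀
    constructor
    · intro τ
      have hfix : Φ^[τ] (hC.fixedPoint Φ) = hC.fixedPoint Φ :=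
        hC.fixedPoint_isFixedPt.iterate τ
      have := (hlip.iterate τ).dist_le_mul S₀ (hC.fixedPoint Φ)
      rw [hfix] at this
      calc dist (Φ^[τ] S₀) (hC.fixedPoint Φ)
          ≤ (K' ^ τ : NNReal) * dist S₀ (hC.fixedPoint Φ) := this
        _ = K ^ τ * dist S₀ (hC.fixedPoint Φ) := by
            rw [NNReal.coe_pow, hKc]
    · exact hC.tendsto_iterate_fixedPoint S₀
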